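/- Let A be an associative unital ℝ-algebra, n a real number, and d, δ, x, y, Δ, Q, N elements of A satisfying x·x = 0, y·y = 0, δ·y + y·δ = 0, x·y + y·x = Q, Q·x = x·Q, Q·δ − δ·Q = 2y, and N·x − x·N = x. Define ιD := −δ·(n·1 + 2N − 2·1) + y·Δ. Let M be a module over A, let w be a real number, and let U ∈ M satisfy N·U = w•U. If there exists W ∈ M with y·U = y·(x·W), then y·(ιD·(x·U)) lies in the subset Q·M = {Q·m : m ∈ M}; in fact y·(ιD·(x·U)) = (n + 2w) • Q·(δ·U − δ·(x·W)). -/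

import Mathlib

/-!
Since `N x − x N = x`, the element `x` raises `N`-eigenvalues by one, so the scalar part of
`ι(𝔻)` acts on `x U` as `n + 2w`, while its `y Δ` part is killed by `y² = 0`. What remains is
`−(n + 2w) y δ x U`; anticommuting `y` past `δ` and `x`, and `δ` past `Q`, rewrites it as
`(n + 2w) Q (δ U − δ x W)` up to a multiple of `y (U − x W)`, which vanishes for an ambient lift.
-/

/-- The operator `ι(𝔻) = −δ̃(n + 2∇_𝕏 − 2) + ι(𝕏)Δ̃` of Branson–Gover, modelled in
an abstract associative `ℝ`-algebra. -/
def iotaD {A : Type*} [Ring A] [Algebra ℝ A] (n : ℝ) (δ y Δ N : A) : A :=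
  -(δ * (n • (1 : A) + (2 : ℝ) • N - (2 : ℝ) • (1 : A))) + y * Δ

section

variable {R A M : Type*} [CommRing R] [Ring A] [Algebra R A]
  [AddCommGroup M] [Module R M] [Module A M] [IsScalarTower R A M]

theorem mul_mul_eq_mul_of_anticomm {x y Q : A} (hxx : x * x = 0) (hxy : x * y + y * x = Q)
    (hQx : Q * x = x * Q) : x * y * x = Q * x := by
  rw [mul_assoc, eq_sub_of_add_eq' hxy, mul_sub, ← mul_assoc, hxx, zero_mul, sub_zero, hQx]

theorem smul_smul_eq_add_one_smul_of_commutator_eq_self {N x : A} (hNx : N * x - x * N = x) {c : R}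
    {U : M} (hU : N • U = c • U) : N • x • U = (c + 1) • x • U := by
  rw [smul_smul, sub_eq_iff_eq_add.mp hNx, add_smul, mul_smul, hU, smul_comm, add_smul, one_smul,
    add_comm]

theorem smul_smul_smul_eq_neg_of_anticomm {δ x y Q : A} (hδy : δ * y + y * δ = 0)
    (hxy : x * y + y * x = Q) (hxyx : x * y * x = Q * x) {c : R} (hQδ : Q * δ - δ * Q = c • y)
    {U W : M} (hW : y • U = y • x • W) : y • δ • x • U = -(Q • (δ • U - δ • x • W)) := by
  have hyδ : y * δ = -(δ * y) := eq_neg_of_add_eq_zero_right hδy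
  have hδQ : δ * Q = Q * δ - c • y := by rw [← hQδ, sub_sub_cancel]
  have hyxU : y • x • U = Q • (U - x • W) := by
    rw [smul_smul, eq_sub_of_add_eq' hxy, sub_smul, mul_smul, hW, smul_smul, smul_smul, hxyx,
      mul_smul, smul_sub]
  have hy : y • (U - x • W) = 0 := by rw [smul_sub, hW, sub_self]
  rw [smul_smul, hyδ, neg_smul, mul_smul, hyxU, smul_smul, hδQ, sub_smul, smul_assoc, hy,
    smul_zero, sub_zero, mul_smul, smul_sub]

end

theorem smul_iotaD_smul_of_smul_eq {A M : Type*} [Ring A] [Algebra ℝ A] [AddCommGroup M]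
    [Module ℝ M] [Module A M] [IsScalarTower ℝ A M] (n : ℝ) {δ y Δ N : A} (hyy : y * y = 0)
    {c : ℝ} {V : M} (hV : N • V = c • V) :
    y • iotaD n δ y Δ N • V = -((n + 2 * c - 2) • y • δ • V) := by
  have hscalar : (n • (1 : A) + (2 : ℝ) • N - (2 : ℝ) • (1 : A)) • V = (n + 2 * c - 2) • V := by
    rw [sub_smul, add_smul, smul_assoc, smul_assoc, smul_assoc, one_smul, hV, smul_smul,
      ← add_smul, ← sub_smul]
  rw [iotaD, add_smul, neg_smul, mul_smul, mul_smul, smul_add, smul_neg, smul_smul y y, hyy,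
    zero_smul, add_zero, hscalar, smul_comm δ, smul_comm y]

theorem stmt_16_general
    {A : Type*} [Ring A] [Algebra ℝ A]
    (n : ℝ) (δ x y Δ Q N : A)
    (h₁ : x * x = 0) (h₂ : y * y = 0)
    (h₃ : δ * y + y * δ = 0)
    (h₄ : x * y + y * x = Q)
    (h₅ : Q * x = x * Q)
    (h₆ : Q * δ - δ * Q = (2 : ℝ) • y)
    (h₇ : N * x - x * N = x)
    (M : Type*) [AddCommGroup M] [Module ℝ M] [Module A M] [IsScalarTower ℝ A M]
    (w : ℝ) (U : M) (hU : N • U = w • U)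
    (W : M) (hW : y • U = y • (x • W)) :
    (∃ m : M, y • (iotaD n δ y Δ N • (x • U)) = Q • m) ∧
    y • (iotaD n δ y Δ N • (x • U)) =
      (n + 2 * w) • (Q • (δ • U - δ • (x • W))) := by
  have hxU := smul_smul_eq_add_one_smul_of_commutator_eq_self h₇ hU
  have hyδx := smul_smul_smul_eq_neg_of_anticomm h₃ h₄ (mul_mul_eq_mul_of_anticomm h₁ h₄ h₅) h₆ hW
  have hmain : y • (iotaD n δ y Δ N • (x • U)) = (n + 2 * w) • (Q • (δ • U - δ • (x • W))) := by
    rw [smul_iotaD_smul_of_smul_eq n h₂ hxU, hyδx, smul_neg, neg_neg]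
    congr 1
    ring
  exact ⟨⟨(n + 2 * w) • (δ • U - δ • x • W), hmain.trans (smul_comm _ _ _)⟩, hmain⟩

/-- Algebraic content of Proposition 3.10(i) of Branson–Gover: if `U` is an
ambient lift (so `ι(𝕏)U = ι(𝕏)ε(𝕏)W`), then `ι(𝕏) ι(𝔻) ε(𝕏) U` lies in `Q·M`;
in fact it equals `(n + 2w) Q (δ̃U − δ̃ε(𝕏)W)`. -/
theorem stmt_16
    {A : Type*} [Ring A] [Algebra ℝ A]
    (n : ℝ) (d δ x y Δ Q N : A)
    (h₁ : x * x = 0) (h₂ : y * y = 0)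
    (h₃ : δ * y + y * δ = 0)
    (h₄ : x * y + y * x = Q)
    (h₅ : Q * x = x * Q)
    (h₆ : Q * δ - δ * Q = (2 : ℝ) • y)
    (h₇ : N * x - x * N = x)
    (M : Type*) [AddCommGroup M] [Module ℝ M] [Module A M] [IsScalarTower ℝ A M]
    (w : ℝ) (U : M) (hU : N • U = w • U)
    (W : M) (hW : y • U = y • (x • W)) :
    (∃ m : M, y • (iotaD n δ y Δ N • (x • U)) = Q • m) ∧
    y • (iotaD n δ y Δ N • (x • U)) =
      (n + 2 * w) • (Q • (δ • U - δ • (x • W))) :=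
  stmt_16_general n δ x y Δ Q N h₁ h₂ h₃ h₄ h₅ h₆ h₇ M w U hU W hW
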